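/- Let (X,T) be a TDS which is mean sensitive with sensitivity constant δ > 0, and set η = δ/2. Then the set D_η = {(x,y) ∈ X × X : limsup_{N→∞} (1/N) Σ_{k=0}^{N−1} d(T^k x, T^k y) ≥ η} is a dense G_δ subset of X × X. -/

import Mathlib

open Filter Metric Set

/-- Birkhoff average of the distance between the orbits of `x` and `y`. -/
noncomputable def birkhoffAvg {X : Type*} [PseudoMetricSpace X]
    (T : X → X) (x y : X) (N : ℕ) : ℝ :=
  (∑ k ∈ Finset.range N, dist (T^[k] x) (T^[k] y)) / N

/-- A pair `(x,y)` is mean proximal if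
`liminf_{N→∞} (1/N) ∑_{k<N} d(T^k x, T^k y) = 0`. -/
def MeanProximalPair {X : Type*} [PseudoMetricSpace X] (T : X → X) (x y : X) : Prop :=
  liminf (birkhoffAvg T x y) atTop = 0

/-- `(X,T)` is mean sensitive. -/
def MeanSensitive {X : Type*} [PseudoMetricSpace X] (T : X → X) : Prop :=
  ∃ δ > (0 : ℝ), ∀ x : X, ∀ ε > (0 : ℝ), ∃ y ∈ ball x ε,
    δ < limsup (birkhoffAvg T x y) atTop

/-- `K` is a mean Li-Yorke set with modulus `η`. -/
def MeanLiYorkeSetMod {X : Type*} [PseudoMetricSpace X]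
    (T : X → X) (η : ℝ) (K : Set X) : Prop :=
  ∀ x ∈ K, ∀ y ∈ K, x ≠ y →
    MeanProximalPair T x y ∧ η ≤ limsup (birkhoffAvg T x y) atTop

/-! The set `D_η` is the `G_δ` set `⋂_{q ∈ ℚ, q < η} ⋂_M ⋃_{N ≥ M} {(x,y) : q < A_N(x,y)}`, the Birkhoff
averages `A_N` being continuous. For density, take `(x,y)` and a point `x'` close to `x` with
`δ < limsup A_N(x,x')`. The upper mean distance `limsup A_N` is symmetric and satisfies the triangle
inequality, so `δ < limsup A_N(x,y) + limsup A_N(x',y)`: one of the nearby pairs `(x,y)`, `(x',y)`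
lies in `D_{δ/2}`. -/

lemma isGδ_setOf_frequently_lt {Z : Type*} [TopologicalSpace Z] {f : ℕ → Z → ℝ}
    (hf : ∀ N, Continuous (f N)) (a : ℝ) :
    IsGδ {z | ∃ᶠ N in atTop, a < f N z} := by
  have hset : {z | ∃ᶠ N in atTop, a < f N z} = ⋂ M, ⋃ N ≥ M, {z | a < f N z} := by
    ext z
    simp [frequently_atTop]
  rw [hset]
  exact .iInter fun M => (isOpen_biUnion fun N _ => isOpen_lt continuous_const (hf N)).isGδ

lemma isGδ_setOf_le_limsup {Z : Type*} [TopologicalSpace Z] {f : ℕ → Z → ℝ}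
    (hf : ∀ N, Continuous (f N))
    (hcobdd : ∀ z, IsCoboundedUnder (· ≤ ·) atTop (f · z))
    (hbdd : ∀ z, IsBoundedUnder (· ≤ ·) atTop (f · z)) (a : ℝ) :
    IsGδ {z | a ≤ limsup (f · z) atTop} := by
  have hset : {z | a ≤ limsup (f · z) atTop} =
      ⋂ q ∈ {q : ℚ | (q : ℝ) < a}, {z | ∃ᶠ N in atTop, (q : ℝ) < f N z} := by
    ext z
    simp only [mem_ofPred_eq, mem_iInter, le_limsup_iff (hcobdd z) (hbdd z)]
    refine ⟨fun h q hq => h q hq, fun h y hy => ?_⟩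
    obtain ⟨q, hyq, hqa⟩ := exists_rat_btwn hy
    exact (h q hqa).mono fun _ => hyq.trans
  rw [hset]
  exact .biInter (to_countable _) fun q _ => isGδ_setOf_frequently_lt hf q

lemma dense_setOf_half_le_of_sensitive {X : Type*} [PseudoMetricSpace X] {ρ : X → X → ℝ}
    (hsymm : ∀ x y, ρ x y = ρ y x) (htri : ∀ x y z, ρ x z ≤ ρ x y + ρ y z) {δ : ℝ}
    (hsens : ∀ x : X, ∀ ε > (0 : ℝ), ∃ y ∈ ball x ε, δ < ρ x y) :
    Dense {z : X × X | δ / 2 ≤ ρ z.1 z.2} := by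
  rw [Metric.dense_iff]
  rintro ⟨x, y⟩ ε hε
  obtain ⟨x', hx'x, hδ⟩ := hsens x ε hε
  have hsplit : δ < ρ x y + ρ x' y := hsymm x' y ▸ hδ.trans_le (htri x y x')
  by_cases hxy : δ / 2 ≤ ρ x y
  · exact ⟨(x, y), mem_ball_self hε, hxy⟩
  · refine ⟨(x', y), ?_, show δ / 2 ≤ ρ x' y by linarith⟩
    simpa [Prod.dist_eq, hε] using mem_ball.mp hx'x

section birkhoffAvg

variable {X : Type*} [PseudoMetricSpace X] (T : X → X)

lemma birkhoffAvg_nonneg (x y : X) (N : ℕ) : 0 ≤ birkhoffAvg T x y N :=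
  div_nonneg (Finset.sum_nonneg fun _ _ => dist_nonneg) N.cast_nonneg

lemma isBoundedUnder_ge_birkhoffAvg (x y : X) :
    IsBoundedUnder (· ≥ ·) atTop (birkhoffAvg T x y) :=
  isBoundedUnder_of ⟨0, birkhoffAvg_nonneg T x y⟩

lemma birkhoffAvg_le_diam [BoundedSpace X] (x y : X) (N : ℕ) :
    birkhoffAvg T x y N ≤ diam (univ : Set X) := by
  rcases N.eq_zero_or_pos with rfl | hN
  · simp [birkhoffAvg, diam_nonneg]
  · rw [birkhoffAvg, div_le_iff₀ (by exact_mod_cast hN)]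
    calc ∑ k ∈ Finset.range N, dist (T^[k] x) (T^[k] y)
        ≤ ∑ _k ∈ Finset.range N, diam (univ : Set X) :=
          Finset.sum_le_sum fun _ _ => dist_le_diam_of_mem (.all _) trivial trivial
      _ = diam (univ : Set X) * N := by simp [mul_comm]

lemma birkhoffAvg_comm (x y : X) : birkhoffAvg T x y = birkhoffAvg T y x := by
  funext N
  simp [birkhoffAvg, dist_comm]

lemma limsup_birkhoffAvg_comm (x y : X) :
    limsup (birkhoffAvg T x y) atTop = limsup (birkhoffAvg T y x) atTop := by
  rw [birkhoffAvg_comm]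

lemma birkhoffAvg_le_add (x y z : X) (N : ℕ) :
    birkhoffAvg T x z N ≤ birkhoffAvg T x y N + birkhoffAvg T y z N := by
  rw [birkhoffAvg, birkhoffAvg, birkhoffAvg, ← add_div, ← Finset.sum_add_distrib]
  gcongr
  exact dist_triangle _ _ _

lemma continuous_birkhoffAvg (hT : Continuous T) (N : ℕ) :
    Continuous fun z : X × X => birkhoffAvg T z.1 z.2 N :=
  (continuous_finsetSum _ fun k _ =>
    ((hT.iterate k).comp continuous_fst).dist ((hT.iterate k).comp continuous_snd)).div_const _

variable [BoundedSpace X]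

lemma isBoundedUnder_le_birkhoffAvg (x y : X) :
    IsBoundedUnder (· ≤ ·) atTop (birkhoffAvg T x y) :=
  isBoundedUnder_of ⟨_, birkhoffAvg_le_diam T x y⟩

lemma limsup_birkhoffAvg_le_add (x y z : X) :
    limsup (birkhoffAvg T x z) atTop ≤
      limsup (birkhoffAvg T x y) atTop + limsup (birkhoffAvg T y z) atTop := by
  have hle := isBoundedUnder_le_birkhoffAvg T
  have hge := isBoundedUnder_ge_birkhoffAvg T
  calc limsup (birkhoffAvg T x z) atTop
      ≤ limsup (birkhoffAvg T x y + birkhoffAvg T y z) atTop :=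
        limsup_le_limsup (.of_forall (birkhoffAvg_le_add T x y z))
          (hge x z).isCoboundedUnder_le (isBoundedUnder_le_add (hle x y) (hle y z))
    _ ≤ limsup (birkhoffAvg T x y) atTop + limsup (birkhoffAvg T y z) atTop :=
        limsup_add_le (hge x y) (hle x y) (hge y z).isCoboundedUnder_le (hle y z)

end birkhoffAvg

theorem Deta_dense_Gdelta_of_meanSensitive_general
    {X : Type*} [MetricSpace X] [CompactSpace X] (T : X → X) (hT : Continuous T)
    (δ : ℝ)
    (hsens : ∀ x : X, ∀ ε > (0 : ℝ), ∃ y ∈ ball x ε,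
      δ < limsup (birkhoffAvg T x y) atTop) :
    IsGδ {z : X × X | δ / 2 ≤ limsup (birkhoffAvg T z.1 z.2) atTop} ∧
    Dense {z : X × X | δ / 2 ≤ limsup (birkhoffAvg T z.1 z.2) atTop} :=
  ⟨isGδ_setOf_le_limsup (continuous_birkhoffAvg T hT)
      (fun z => (isBoundedUnder_ge_birkhoffAvg T z.1 z.2).isCoboundedUnder_le)
      (fun z => isBoundedUnder_le_birkhoffAvg T z.1 z.2) (δ / 2),
    dense_setOf_half_le_of_sensitive (limsup_birkhoffAvg_comm T) (limsup_birkhoffAvg_le_add T)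
      hsens⟩

/-- If `(X,T)` is mean sensitive with sensitivity constant `δ`, then for `η = δ/2`
the set `D_η` of pairs whose upper Birkhoff distance average is at least `η` is a
dense `G_δ` subset of `X × X`. -/
theorem Deta_dense_Gdelta_of_meanSensitive
    {X : Type*} [MetricSpace X] [CompactSpace X] (T : X → X) (hT : Continuous T)
    (δ : ℝ) (hδ : 0 < δ)
    (hsens : ∀ x : X, ∀ ε > (0 : ℝ), ∃ y ∈ ball x ε,
      δ < limsup (birkhoffAvg T x y) atTop) :
    IsGδ {z : X × X | δ / 2 ≤ limsup (birkhoffAvg T z.1 z.2) atTop} ∧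
    Dense {z : X × X | δ / 2 ≤ limsup (birkhoffAvg T z.1 z.2) atTop} :=
  Deta_dense_Gdelta_of_meanSensitive_general T hT δ hsens
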